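/- arXiv:2404.09892 — 4 statements merged into one kernel-verified Lean document; each statement's English description precedes it below -/
import Mathlib

section
/- Let ϱ ∈ [0,1), and let (e_n), (C_n), (Q_n) be real sequences with C_0 = e_0, Q_0 = 1, Q_{n+1} = ϱ Q_n + 1, C_{n+1} = (ϱ Q_n C_n + e_{n+1}) / Q_{n+1}. Assume that for every n ≥ 0 we have e_{n+1} ≤ C_n + d_n with d_n ≤ 0. Then for all n ≥ 1: e_n ≤ C_n ≤ C_{n-1} ≤ e_0. In particular (C_n) is monotonically nonincreasing. -/
/-- monotonicity properties of the nonmonotone averaging sequence. -/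
theorem stmt4 (ϱ : ℝ) (hϱ0 : 0 ≤ ϱ) (hϱ1 : ϱ < 1)
    (e C Q d : ℕ → ℝ) (hC0 : C 0 = e 0) (hQ0 : Q 0 = 1)
    (hQ : ∀ n, Q (n + 1) = ϱ * Q n + 1)
    (hC : ∀ n, C (n + 1) = (ϱ * Q n * C n + e (n + 1)) / Q (n + 1))
    (hd : ∀ n, d n ≤ 0) (hstep : ∀ n, e (n + 1) ≤ C n + d n) :
    ∀ n : ℕ, 1 ≤ n → e n ≤ C n ∧ C n ≤ C (n - 1) ∧ C (n - 1) ≤ e 0 := by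
  have hQ1 : ∀ n, 1 ≤ Q n := by
    intro n
    induction n with
    | zero => simp [hQ0]
    | succ k ih =>
      rw [hQ k]
      nlinarith
  have hQpos : ∀ n, (0:ℝ) < Q n := fun n => lt_of_lt_of_le one_pos (hQ1 n)
  have heC : ∀ n, e (n + 1) ≤ C n := fun n =>
    le_trans (hstep n) (by linarith [hd n])
  -- key: e (n+1) ≤ C (n+1) ≤ C n
  have key : ∀ n, e (n + 1) ≤ C (n + 1) ∧ C (n + 1) ≤ C n := by
    intro n
    have hQn := hQpos n
    have hQn1 := hQpos (n + 1)
    have hQe : Q (n + 1) = ϱ * Q n + 1 := hQ n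
    have hCe : C (n + 1) * Q (n + 1) = ϱ * Q n * C n + e (n + 1) := by
      rw [hC n]
      field_simp
    have h1 := heC n
    have hw : 0 ≤ ϱ * Q n := mul_nonneg hϱ0 (le_of_lt hQn)
    have h2 : e (n + 1) * Q (n + 1) ≤ C (n + 1) * Q (n + 1) := by
      rw [hCe, hQe]; nlinarith
    have h3 : C (n + 1) * Q (n + 1) ≤ C n * Q (n + 1) := by
      rw [hCe, hQe]; nlinarith
    exact ⟨le_of_mul_le_mul_right h2 hQn1, le_of_mul_le_mul_right h3 hQn1⟩
  have hCle : ∀ n, C n ≤ e 0 := by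
    intro n
    induction n with
    | zero => rw [hC0]
    | succ k ih => exact le_trans (key k).2 ih
  intro n hn
  cases n with
  | zero => omega
  | succ k => exact ⟨(key k).1, by simpa using (key k).2, by simpa using hCle k⟩
end

section
/- Let ϱ ∈ [0,1), σ ∈ (0,1), and let (e_n), (C_n), (Q_n), (δ_n) be real sequences with C_0 = e_0, Q_0 = 1, Q_{n+1} = ϱ Q_n + 1, C_{n+1} = (ϱ Q_n C_n + e_{n+1})/Q_{n+1}, δ_n ≥ 0, and e_{n+1} ≤ C_n - σ δ_n for all n. If (e_n) is bounded below, then (C_n) converges to some finite limit C_∞, e_n → C_∞, and ∑_{n=0}^{∞} δ_n < ∞. -/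
/-- convergence of the averaged values and summability of the descent terms. -/
theorem stmt5 (ϱ σ : ℝ) (hϱ0 : 0 ≤ ϱ) (hϱ1 : ϱ < 1) (hσ0 : 0 < σ) (hσ1 : σ < 1)
    (e C Q δ : ℕ → ℝ) (hC0 : C 0 = e 0) (hQ0 : Q 0 = 1)
    (hQ : ∀ n, Q (n + 1) = ϱ * Q n + 1)
    (hC : ∀ n, C (n + 1) = (ϱ * Q n * C n + e (n + 1)) / Q (n + 1))
    (hδ : ∀ n, 0 ≤ δ n) (hstep : ∀ n, e (n + 1) ≤ C n - σ * δ n)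
    (hbd : ∃ m : ℝ, ∀ n, m ≤ e n) :
    ∃ Cinf : ℝ, Filter.Tendsto C Filter.atTop (nhds Cinf) ∧
      Filter.Tendsto e Filter.atTop (nhds Cinf) ∧ Summable δ := by
  obtain ⟨m, hm⟩ := hbd
  have h1ϱ : 0 < 1 - ϱ := by linarith
  set L : ℝ := 1 / (1 - ϱ) with hLdef
  have hL1 : 1 ≤ L := by
    rw [hLdef, le_div_iff₀ h1ϱ]; nlinarith
  -- explicit formula for Q
  have hQform : ∀ n, Q n = L + ϱ ^ n * (1 - L) := by
    intro n
    induction n with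
    | zero => simp [hQ0]
    | succ n ih =>
      rw [hQ n, ih, hLdef]
      field_simp
      ring
  have hQ1 : ∀ n, 1 ≤ Q n := by
    intro n
    induction n with
    | zero => simp [hQ0]
    | succ n ih => rw [hQ n]; nlinarith
  have hQL : ∀ n, Q n ≤ L := by
    intro n
    rw [hQform n]
    have hp : 0 ≤ ϱ ^ n := pow_nonneg hϱ0 n
    nlinarith
  have hQpos : ∀ n, 0 < Q n := fun n => lt_of_lt_of_le one_pos (hQ1 n)
  -- Q tendsto L
  have hQtend : Filter.Tendsto Q Filter.atTop (nhds L) := by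
    have hpow : Filter.Tendsto (fun n : ℕ => ϱ ^ n) Filter.atTop (nhds 0) :=
      tendsto_pow_atTop_nhds_zero_of_lt_one hϱ0 hϱ1
    have : Filter.Tendsto (fun n : ℕ => L + ϱ ^ n * (1 - L)) Filter.atTop
        (nhds (L + 0 * (1 - L))) := by
      exact (tendsto_const_nhds).add (hpow.mul tendsto_const_nhds)
    simp only [zero_mul, add_zero] at this
    exact this.congr fun n => (hQform n).symm
  -- key difference inequality
  have hdiff : ∀ n, σ * (1 - ϱ) * δ n ≤ C n - C (n + 1) := by
    intro n
    have hQn1 : Q (n + 1) ≠ 0 := (hQpos (n+1)).ne'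
    have h1 : C n - C (n + 1) = (C n - e (n + 1)) / Q (n + 1) := by
      rw [hC n]
      field_simp
      rw [hQ n]; ring
    rw [h1]
    have h2 : σ * δ n ≤ C n - e (n + 1) := by linarith [hstep n]
    have h3 : σ * δ n / Q (n + 1) ≤ (C n - e (n + 1)) / Q (n + 1) :=
      div_le_div_of_nonneg_right h2 (hQpos (n+1)).le |>.trans_eq rfl
    refine le_trans ?_ h3
    rw [div_eq_mul_inv]
    have hinv : 1 - ϱ ≤ (Q (n + 1))⁻¹ := by
      rw [le_inv_comm₀ h1ϱ (hQpos (n+1))]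
      simpa [hLdef] using hQL (n + 1)
    have hδn := hδ n
    nlinarith [mul_nonneg hσ0.le hδn]
  have hanti : Antitone C := by
    apply antitone_nat_of_succ_le
    intro n
    have := hdiff n
    nlinarith [hδ n, mul_nonneg (mul_nonneg hσ0.le h1ϱ.le) (hδ n)]
  have hCbd : ∀ n, m ≤ C n := by
    intro n
    induction n with
    | zero => rw [hC0]; exact hm 0
    | succ n ih =>
      rw [hC n]
      rw [le_div_iff₀ (hQpos (n+1)), hQ n]
      have h1 := hm (n + 1)
      nlinarith [mul_nonneg hϱ0 (hQpos n).le, hQpos n]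
  -- C converges
  have hCtend : Filter.Tendsto C Filter.atTop (nhds (⨅ n, C n)) :=
    tendsto_atTop_ciInf hanti ⟨m, fun x ⟨n, hn⟩ => hn ▸ hCbd n⟩
  set Cinf := ⨅ n, C n with hCinf
  refine ⟨Cinf, hCtend, ?_, ?_⟩
  · -- e tendsto Cinf
    have he : ∀ n, e (n + 1) = Q (n + 1) * C (n + 1) - ϱ * Q n * C n := by
      intro n
      have hQn1 : Q (n + 1) ≠ 0 := (hQpos (n+1)).ne'
      rw [hC n]
      field_simp
      ring
    have ht : Filter.Tendsto (fun n => Q (n + 1) * C (n + 1) - ϱ * Q n * C n)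
        Filter.atTop (nhds (L * Cinf - ϱ * L * Cinf)) := by
      have hQs : Filter.Tendsto (fun n => Q (n + 1)) Filter.atTop (nhds L) :=
        hQtend.comp (Filter.tendsto_add_atTop_nat 1)
      have hCs : Filter.Tendsto (fun n => C (n + 1)) Filter.atTop (nhds Cinf) :=
        hCtend.comp (Filter.tendsto_add_atTop_nat 1)
      exact (hQs.mul hCs).sub ((tendsto_const_nhds.mul hQtend).mul hCtend)
    have hval : L * Cinf - ϱ * L * Cinf = Cinf := by
      rw [hLdef]; field_simp
    have ht2 : Filter.Tendsto (fun n => e (n + 1)) Filter.atTop (nhds Cinf) := by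
      rw [← hval]
      exact ht.congr (fun n => (he n).symm)
    exact (Filter.tendsto_add_atTop_iff_nat 1).mp ht2
  · -- summability
    have hc : 0 < σ * (1 - ϱ) := mul_pos hσ0 h1ϱ
    have hsum : Summable (fun n => σ * (1 - ϱ) * δ n) := by
      apply summable_of_sum_range_le (c := C 0 - m)
      · intro n; exact mul_nonneg hc.le (hδ n)
      · intro n
        have htel : ∑ i ∈ Finset.range n, (C i - C (i + 1)) = C 0 - C n := by
          induction n with
          | zero => simp
          | succ n ih => rw [Finset.sum_range_succ, ih]; ring
        calc ∑ i ∈ Finset.range n, σ * (1 - ϱ) * δ i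
            ≤ ∑ i ∈ Finset.range n, (C i - C (i + 1)) :=
              Finset.sum_le_sum fun i _ => hdiff i
          _ = C 0 - C n := htel
          _ ≤ C 0 - m := by linarith [hCbd n]
    have := (summable_mul_left_iff hc.ne').mp hsum
    exact this
end

section
/- Let H be a real Hilbert space, U ⊂ H × H open, Ê : U → ℝ a C¹ function, and suppose (w_n, s_n η_n) ∈ U with w_n → w_* strongly in H, η_n ⇀ η_* weakly in H, s_n → 0 with s_n ≠ 0, and (w_*, 0) ∈ U. Then (Ê(w_n, s_n η_n) - Ê(w_n, 0)) / s_n → ⟨∂_v Ê(w_*, 0), η_*⟩ as n → ∞, where ∂_v Ê denotes the partial Fréchet derivative with respect to the second variable. -/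
open Filter NormedSpace

/-- A weakly convergent sequence is bounded (via Banach–Steinhaus). -/
lemma weak_seq_bounded {H : Type*} [NormedAddCommGroup H] [NormedSpace ℝ H]
    (η : ℕ → H) (ηs : H)
    (hweak : ∀ f : H →L[ℝ] ℝ, Tendsto (fun n => f (η n)) atTop (nhds (f ηs))) :
    ∃ M : ℝ, 0 ≤ M ∧ ∀ n, ‖η n‖ ≤ M := by
  have hpt : ∀ f : StrongDual ℝ H, ∃ C, ∀ n,
      ‖(inclusionInDoubleDual ℝ H (η n)) f‖ ≤ C := by
    intro f
    obtain ⟨C, hC⟩ := (hweak f).norm.bddAbove_range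
    exact ⟨C, fun n => by simpa using hC ⟨n, rfl⟩⟩
  obtain ⟨C, hC⟩ := banach_steinhaus hpt
  refine ⟨max C 0, le_max_right _ _, fun n => ?_⟩
  have h1 : ‖η n‖ = ‖inclusionInDoubleDual ℝ H (η n)‖ :=
    ((inclusionInDoubleDualLi ℝ (E := H)).norm_map (η n)).symm
  exact h1.le.trans ((hC n).trans (le_max_left _ _))

set_option maxHeartbeats 1000000 in
/-- difference quotients of a C¹ function along the second variable converge
to the partial derivative paired with the weak limit. -/
theorem stmt8 {H : Type*} [NormedAddCommGroup H] [InnerProductSpace ℝ H] [CompleteSpace H]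
    (U : Set (H × H)) (hU : IsOpen U)
    (Ehat : H × H → ℝ) (hE : ContDiffOn ℝ 1 Ehat U)
    (w : ℕ → H) (ws : H) (η : ℕ → H) (ηs : H) (s : ℕ → ℝ)
    (hmem : ∀ n, (w n, s n • η n) ∈ U) (hmem0 : ∀ n, (w n, (0 : H)) ∈ U)
    (hstar : (ws, (0 : H)) ∈ U)
    (hw : Filter.Tendsto w Filter.atTop (nhds ws))
    (hweak : ∀ f : H →L[ℝ] ℝ,
      Filter.Tendsto (fun n => f (η n)) Filter.atTop (nhds (f ηs)))
    (hs : Filter.Tendsto s Filter.atTop (nhds 0)) (hsne : ∀ n, s n ≠ 0) :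
    Filter.Tendsto (fun n => (Ehat (w n, s n • η n) - Ehat (w n, 0)) / s n) Filter.atTop
      (nhds (fderiv ℝ (fun v : H => Ehat (ws, v)) 0 ηs)) := by
  obtain ⟨M, hM0, hM⟩ := weak_seq_bounded η ηs hweak
  -- differentiability of Ehat on U
  have hdiff : ∀ p ∈ U, DifferentiableAt ℝ Ehat p := fun p hp =>
    (hE.differentiableOn one_ne_zero).differentiableAt (hU.mem_nhds hp)
  -- partial derivative in the second variable
  set D : H × H → (H →L[ℝ] ℝ) :=
    fun p => (fderiv ℝ Ehat p).comp (ContinuousLinearMap.inr ℝ H H) with hD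
  have hpart : ∀ a b, (a, b) ∈ U →
      HasFDerivAt (fun v => Ehat (a, v)) (D (a, b)) b := by
    intro a b hp
    have h1 : HasFDerivAt Ehat (fderiv ℝ Ehat (a, b)) (a, b) :=
      (hdiff _ hp).hasFDerivAt
    have h2 : HasFDerivAt (fun v : H => (a, v)) (ContinuousLinearMap.inr ℝ H H) b :=
      (hasFDerivAt_const a b).prodMk (hasFDerivAt_id b)
    exact h1.comp b h2
  set D₀ : H →L[ℝ] ℝ := D (ws, 0) with hD₀
  have htarget : fderiv ℝ (fun v : H => Ehat (ws, v)) 0 = D₀ :=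
    (hpart ws 0 hstar).fderiv
  rw [htarget]
  -- split: q n = (q n - D₀ (η n)) + D₀ (η n)
  have hlim2 : Tendsto (fun n => D₀ (η n)) atTop (nhds (D₀ ηs)) := hweak D₀
  have hlim1 : Tendsto
      (fun n => (Ehat (w n, s n • η n) - Ehat (w n, 0)) / s n - D₀ (η n)) atTop (nhds 0) := by
    rw [NormedAddCommGroup.tendsto_nhds_zero]
    intro ε hε
    -- continuity of the full derivative at (ws, 0)
    have hcont : ContinuousAt (fderiv ℝ Ehat) (ws, 0) :=
      (hE.continuousOn_fderiv_of_isOpen hU le_rfl).continuousAt (hU.mem_nhds hstar)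
    set ε' : ℝ := ε / (2 * (M + 1)) with hε'def
    have hε' : 0 < ε' := by positivity
    obtain ⟨δ, hδ0, hδ⟩ := (Metric.continuousAt_iff (f := fderiv ℝ Ehat)).mp hcont ε' hε'
    obtain ⟨δ₁, hδ₁0, hδ₁⟩ := Metric.isOpen_iff.mp hU (ws, 0) hstar
    set r : ℝ := min δ δ₁ / 2 with hrdef
    have hr0 : 0 < r := by positivity
    -- eventually the whole segment lies in a good ball
    have hwev : ∀ᶠ n in atTop, ‖w n - ws‖ < r := by
      have := (Metric.tendsto_atTop.mp hw) r hr0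
      obtain ⟨N, hN⟩ := this
      exact eventually_atTop.mpr ⟨N, fun n hn => by
        simpa [dist_eq_norm] using hN n hn⟩
    have hsev : ∀ᶠ n in atTop, |s n| * M < r := by
      have hsm : Tendsto (fun n => |s n| * M) atTop (nhds 0) := by
        simpa using (hs.abs.mul_const M)
      exact (hsm.eventually (gt_mem_nhds hr0))
    filter_upwards [hwev, hsev] with n hwn hsn
    -- the key mean value estimate on the ball K = closedBall 0 r in H
    have hball : ∀ v : H, ‖v‖ ≤ r → (w n, v) ∈ U ∧ dist (w n, v) ((ws, 0) : H × H) < δ := by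
      intro v hv
      have hd : dist ((w n, v) : H × H) (ws, 0) < min δ δ₁ := by
        rw [Prod.dist_eq]
        have h1 : dist (w n) ws < min δ δ₁ := by
          rw [dist_eq_norm]
          calc ‖w n - ws‖ < r := hwn
          _ < min δ δ₁ := by rw [hrdef]; linarith [lt_min hδ0 hδ₁0]
        have h2 : dist v (0 : H) < min δ δ₁ := by
          rw [dist_eq_norm, sub_zero]
          calc ‖v‖ ≤ r := hv
          _ < min δ δ₁ := by rw [hrdef]; linarith [lt_min hδ0 hδ₁0]
        exact max_lt h1 h2
      refine ⟨hδ₁ (Metric.mem_ball.mpr (hd.trans_le (min_le_right _ _))), hd.trans_le (min_le_left _ _)⟩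
    have hDbound : ∀ v : H, ‖v‖ ≤ r → ‖D (w n, v) - D₀‖ ≤ ε' := by
      intro v hv
      obtain ⟨hvU, hvd⟩ := hball v hv
      have := hδ hvd
      rw [dist_eq_norm (fderiv ℝ Ehat (w n, v))] at this
      have hcomp : D (w n, v) - D₀ =
          (fderiv ℝ Ehat (w n, v) - fderiv ℝ Ehat (ws, 0)).comp
            (ContinuousLinearMap.inr ℝ H H) := by
        simp [hD, hD₀, ContinuousLinearMap.sub_comp]
      rw [hcomp]
      calc ‖(fderiv ℝ Ehat (w n, v) - fderiv ℝ Ehat (ws, 0)).comp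
            (ContinuousLinearMap.inr ℝ H H)‖
          ≤ ‖fderiv ℝ Ehat (w n, v) - fderiv ℝ Ehat (ws, 0)‖ *
            ‖ContinuousLinearMap.inr ℝ H H‖ := ContinuousLinearMap.opNorm_comp_le _ _
        _ ≤ ‖fderiv ℝ Ehat (w n, v) - fderiv ℝ Ehat (ws, 0)‖ * 1 := by
            have h1 : ‖ContinuousLinearMap.inr ℝ H H‖ ≤ 1 :=
              ContinuousLinearMap.opNorm_le_bound _ zero_le_one
                (fun x => by simp [Prod.norm_def])
            exact mul_le_mul_of_nonneg_left h1 (norm_nonneg (fderiv ℝ Ehat (w n, v) - fderiv ℝ Ehat (ws, 0)))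
        _ ≤ ε' := by rw [mul_one]; exact this.le
    -- mean value inequality on closedBall 0 r
    have hsegment : ‖s n • η n‖ ≤ r := by
      rw [norm_smul, Real.norm_eq_abs]
      calc |s n| * ‖η n‖ ≤ |s n| * M := by
            exact mul_le_mul_of_nonneg_left (hM n) (abs_nonneg _)
        _ ≤ r := hsn.le
    have hmvt : ‖Ehat (w n, s n • η n) - Ehat (w n, 0) - D₀ (s n • η n - 0)‖
        ≤ ε' * ‖s n • η n - (0 : H)‖ := by
      refine Convex.norm_image_sub_le_of_norm_hasFDerivWithin_le'
        (f := fun v => Ehat (w n, v)) (f' := fun v => D (w n, v)) (φ := D₀)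
        (s := Metric.closedBall (0 : H) r) ?_ ?_ (convex_closedBall _ _) ?_ ?_
      · intro v hv
        have hvU := (hball v (by simpa using hv)).1
        exact (hpart (w n) v hvU).hasFDerivWithinAt
      · intro v hv
        exact hDbound v (by simpa using hv)
      · simpa using hr0.le
      · simpa using hsegment

    have hkey : |(Ehat (w n, s n • η n) - Ehat (w n, 0)) / s n - D₀ (η n)|
        ≤ ε' * M := by
      have hDsmul : D₀ (s n • η n) = s n * D₀ (η n) := by simp
      have heq : (Ehat (w n, s n • η n) - Ehat (w n, 0)) / s n - D₀ (η n) =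
          (Ehat (w n, s n • η n) - Ehat (w n, 0) - D₀ (s n • η n)) / s n := by
        rw [hDsmul]
        field_simp [hsne n]
      rw [heq, abs_div]
      rw [sub_zero] at hmvt
      rw [Real.norm_eq_abs] at hmvt
      have hns : ‖s n • η n‖ = |s n| * ‖η n‖ := by rw [norm_smul, Real.norm_eq_abs]
      have habs : 0 < |s n| := abs_pos.mpr (hsne n)
      rw [div_le_iff₀ habs]
      calc |Ehat (w n, s n • η n) - Ehat (w n, 0) - D₀ (s n • η n)|
          ≤ ε' * ‖s n • η n‖ := hmvt
        _ = ε' * (|s n| * ‖η n‖) := by rw [hns]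
        _ ≤ ε' * (|s n| * M) := by
            exact mul_le_mul_of_nonneg_left
              (mul_le_mul_of_nonneg_left (hM n) (abs_nonneg _)) hε'.le
        _ = ε' * M * |s n| := by ring
    calc ‖(Ehat (w n, s n • η n) - Ehat (w n, 0)) / s n - D₀ (η n)‖
        ≤ ε' * M := by rw [Real.norm_eq_abs]; exact hkey
      _ < ε := by
          rw [hε'def]
          rw [div_mul_eq_mul_div, div_lt_iff₀ (by positivity)]
          nlinarith
  have := hlim1.add hlim2
  simpa using this
end

section
/- Let H be a real Hilbert space and E : H → ℝ a C² functional. Fix u_0 ∈ H \ {0} with E'(u_0) = 0, and suppose: (i) there is w with ⟨E''(u_0)w, w⟩ < 0; (ii) ⟨E''(u_0)ξ, ξ⟩ ≥ c ‖ξ‖²_H for all ξ in a closed subspace T with some c > 0; (iii) φ : V → H is a map defined on a neighborhood V of 0 in T with φ(ξ) = u_0 + ξ + r(ξ), ‖r(ξ)‖_H = o(‖ξ‖_H). Then there exists a neighborhood V₁ ⊂ V of 0 such that E(φ(ξ)) > E(u_0) for all ξ ∈ V₁ \ {0}. -/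
open Asymptotics Filter

/-- Second-order Taylor estimate at a critical point of a `C²` function. -/
lemma taylor2 {H : Type*} [NormedAddCommGroup H] [NormedSpace ℝ H]
    (E : H → ℝ) (hE : ContDiff ℝ 2 E) (u0 : H) (hcrit : fderiv ℝ E u0 = 0)
    (ε : ℝ) (hε : 0 < ε) :
    ∃ δ > 0, ∀ v : H, ‖v‖ < δ →
      |E (u0 + v) - E u0 - 2⁻¹ * fderiv ℝ (fderiv ℝ E) u0 v v| ≤ ε * ‖v‖ ^ 2 := by
  set D := fderiv ℝ E with hD
  set Q := fderiv ℝ D u0 with hQdef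
  have hsymm : ∀ a b : H, Q a b = Q b a := fun a b =>
    (hE.contDiffAt.isSymmSndFDerivAt (by norm_num)).eq a b
  have hD1 : ContDiff ℝ 1 D := hE.fderiv_right (le_refl _)
  have hQ : HasFDerivAt D Q u0 := ((hD1.differentiable one_ne_zero) u0).hasFDerivAt
  have hlo : (fun x : H => D (u0 + x) - D u0 - Q x) =o[nhds 0] fun x : H => x :=
    hasFDerivAt_iff_isLittleO_nhds_zero.mp hQ
  have hev : ∀ᶠ x in nhds (0 : H), ‖D (u0 + x) - D u0 - Q x‖ ≤ ε * ‖x‖ :=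
    hlo.def hε
  rcases Metric.eventually_nhds_iff_ball.mp hev with ⟨δ, hδ, hball⟩
  refine ⟨δ, hδ, fun v hv => ?_⟩
  -- the function and its derivative
  set g : H → ℝ := fun x => E (u0 + x) - 2⁻¹ * Q x x with hg
  set g' : H → (H →L[ℝ] ℝ) := fun x => D (u0 + x) - Q x with hg'
  have hB : IsBoundedBilinearMap ℝ fun p : H × H => Q p.1 p.2 :=
    Q.isBoundedBilinearMap
  have hderiv : ∀ x : H, HasFDerivAt g (g' x) x := by
    intro x
    have h1 : HasFDerivAt (fun x : H => E (u0 + x)) (D (u0 + x)) x := by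
      have := ((hE.differentiable two_ne_zero) (u0 + x)).hasFDerivAt
      simpa [Function.comp_def] using this.comp x ((hasFDerivAt_id x).const_add u0)
    have hp : HasFDerivAt (fun x : H => (x, x))
        ((ContinuousLinearMap.id ℝ H).prod (ContinuousLinearMap.id ℝ H)) x :=
      (hasFDerivAt_id x).prodMk (hasFDerivAt_id x)
    have h2' := HasFDerivAt.comp (f := fun y : H => (y, y)) x (hB.hasFDerivAt (x, x)) hp
    have h2 : HasFDerivAt (fun x : H => Q x x)
        ((hB.deriv (x, x)).comp ((ContinuousLinearMap.id ℝ H).prod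
          (ContinuousLinearMap.id ℝ H))) x := h2'
    have h3 := h1.sub (h2.const_mul (2⁻¹ : ℝ))
    refine h3.congr_fderiv ?_
    ext y
    simp [g', IsBoundedBilinearMap.deriv_apply, hsymm x y]
    ring
  -- mean value inequality on the segment from 0 to v
  have hsub : segment ℝ (0 : H) v ⊆ Metric.ball (0 : H) δ := by
    intro x hx
    rcases segment_eq_image ℝ (0 : H) v ▸ hx with ⟨t, ht, rfl⟩
    simp only [smul_zero, zero_add, sub_zero]
    rw [Metric.mem_ball, dist_zero_right, norm_smul]
    calc ‖(t : ℝ)‖ * ‖v‖ ≤ 1 * ‖v‖ := by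
          apply mul_le_mul_of_nonneg_right _ (norm_nonneg v)
          rw [Real.norm_eq_abs, abs_le]; constructor <;> linarith [ht.1, ht.2]
      _ = ‖v‖ := one_mul _
      _ < δ := hv
  have hnorm : ∀ x ∈ segment ℝ (0 : H) v, ‖g' x‖ ≤ ε * ‖v‖ := by
    intro x hx
    have hxv : ‖x‖ ≤ ‖v‖ := by
      rcases segment_eq_image ℝ (0 : H) v ▸ hx with ⟨t, ht, rfl⟩
      simp only [smul_zero, zero_add, sub_zero]
      rw [norm_smul]
      calc ‖(t : ℝ)‖ * ‖v‖ ≤ 1 * ‖v‖ := by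
            apply mul_le_mul_of_nonneg_right _ (norm_nonneg v)
            rw [Real.norm_eq_abs, abs_le]; constructor <;> linarith [ht.1, ht.2]
        _ = ‖v‖ := one_mul _
    have hxball : x ∈ Metric.ball (0 : H) δ := hsub hx
    have hbd := hball x (by simpa using hxball)
    have hg'x : g' x = D (u0 + x) - D u0 - Q x := by
      rw [hg']; simp [hcrit]
    rw [hg'x]
    calc ‖D (u0 + x) - D u0 - Q x‖ ≤ ε * ‖x‖ := hbd
      _ ≤ ε * ‖v‖ := mul_le_mul_of_nonneg_left hxv hε.le
  have hmvt := (convex_segment (0 : H) v).norm_image_sub_le_of_norm_hasFDerivWithin_le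
    (fun x hx => (hderiv x).hasFDerivWithinAt) hnorm (left_mem_segment ℝ (0 : H) v)
    (right_mem_segment ℝ (0 : H) v)
  have hg0 : g 0 = E u0 := by simp [hg]
  have hfinal : ‖g v - g 0‖ ≤ ε * ‖v‖ * ‖v‖ := by simpa using hmvt
  rw [hg0] at hfinal
  have : g v - E u0 = E (u0 + v) - E u0 - 2⁻¹ * Q v v := by rw [hg]; ring
  rw [this, Real.norm_eq_abs] at hfinal
  calc |E (u0 + v) - E u0 - 2⁻¹ * Q v v| ≤ ε * ‖v‖ * ‖v‖ := hfinal
    _ = ε * ‖v‖ ^ 2 := by ring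

/-- a nondegenerate 1-saddle is a strict local minimizer along a local
parametrization of the Nehari manifold. -/
theorem stmt19 {H : Type*} [NormedAddCommGroup H] [InnerProductSpace ℝ H] [CompleteSpace H]
    (E : H → ℝ) (hE : ContDiff ℝ 2 E) (u0 : H) (hu0 : u0 ≠ 0)
    (hcrit : fderiv ℝ E u0 = 0)
    (w : H) (hneg : fderiv ℝ (fderiv ℝ E) u0 w w < 0)
    (T : Submodule ℝ H) (hTclosed : IsClosed (T : Set H))
    (c : ℝ) (hc : 0 < c)
    (hcoer : ∀ ξ ∈ T, c * ‖ξ‖ ^ 2 ≤ fderiv ℝ (fderiv ℝ E) u0 ξ ξ)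
    (V : Set H) (hV : V ∈ nhdsWithin (0 : H) (T : Set H))
    (φ : H → H)
    (hr : Asymptotics.IsLittleO (nhdsWithin (0 : H) (T : Set H))
      (fun ξ : H => φ ξ - u0 - ξ) (fun ξ : H => ξ)) :
    ∃ V1 ∈ nhdsWithin (0 : H) (T : Set H), V1 ⊆ V ∧
      ∀ ξ ∈ V1, ξ ≠ 0 → E u0 < E (φ ξ) := by
  set Q := fderiv ℝ (fderiv ℝ E) u0 with hQdef
  set M := ‖Q‖ with hMdef
  have hM : (0 : ℝ) ≤ M := norm_nonneg Q
  obtain ⟨δ, hδ, htay⟩ := taylor2 E hE u0 hcrit (c / 16) (by positivity)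
  set η := min 1 (c / (12 * (M + 1))) with hηdef
  have hη : 0 < η := lt_min one_pos (by positivity)
  have hη1 : η ≤ 1 := min_le_left _ _
  have hη2 : η ≤ c / (12 * (M + 1)) := min_le_right _ _
  have hMη : 3 * M * η ≤ c / 4 := by
    have h1 : 3 * M * η ≤ 3 * (M + 1) * η := by nlinarith
    have h2 : 3 * (M + 1) * η ≤ 3 * (M + 1) * (c / (12 * (M + 1))) := by
      apply mul_le_mul_of_nonneg_left hη2 (by positivity)
    have h3 : 3 * (M + 1) * (c / (12 * (M + 1))) = c / 4 := by
      field_simp; ring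
    linarith
  have hrev : ∀ᶠ ξ in nhdsWithin (0 : H) (T : Set H), ‖φ ξ - u0 - ξ‖ ≤ η * ‖ξ‖ :=
    hr.def hη
  have hball : ∀ᶠ ξ in nhdsWithin (0 : H) (T : Set H), ‖ξ‖ < δ / 2 := by
    apply Filter.Eventually.filter_mono nhdsWithin_le_nhds
    have : Metric.ball (0 : H) (δ / 2) ∈ nhds (0 : H) :=
      Metric.ball_mem_nhds _ (by positivity)
    filter_upwards [this] with ξ hξ
    simpa [dist_zero_right] using hξ
  refine ⟨{ξ : H | ξ ∈ V ∧ ξ ∈ (T : Set H) ∧ ‖φ ξ - u0 - ξ‖ ≤ η * ‖ξ‖ ∧ ‖ξ‖ < δ / 2},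
    ?_, fun ξ hξ => hξ.1, ?_⟩
  · filter_upwards [hV, self_mem_nhdsWithin, hrev, hball] with ξ h1 h2 h3 h4
    exact ⟨h1, h2, h3, h4⟩
  · rintro ξ ⟨hξV, hξT, hξr, hξδ⟩ hξ0
    have hξpos : 0 < ‖ξ‖ := norm_pos_iff.mpr hξ0
    set r := φ ξ - u0 - ξ with hrdef
    set v := ξ + r with hvdef
    have hφ : φ ξ = u0 + v := by rw [hvdef, hrdef]; abel
    have hrn : ‖r‖ ≤ η * ‖ξ‖ := hξr
    have hvn : ‖v‖ ≤ 2 * ‖ξ‖ := by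
      have h1 : η * ‖ξ‖ ≤ 1 * ‖ξ‖ := mul_le_mul_of_nonneg_right hη1 (norm_nonneg ξ)
      calc ‖v‖ ≤ ‖ξ‖ + ‖r‖ := norm_add_le _ _
        _ ≤ ‖ξ‖ + η * ‖ξ‖ := by linarith
        _ ≤ 2 * ‖ξ‖ := by linarith
    have hvδ : ‖v‖ < δ := by linarith
    have htv := htay v hvδ
    have hQv : Q v v = Q ξ ξ + Q ξ r + Q r ξ + Q r r := by
      rw [hvdef]
      simp only [map_add, ContinuousLinearMap.add_apply]
      ring
    have hQξr : -(M * η * ‖ξ‖ ^ 2) ≤ Q ξ r := by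
      have h1 := Q.le_opNorm₂ ξ r
      rw [Real.norm_eq_abs] at h1
      have h2 : M * ‖ξ‖ * ‖r‖ ≤ M * η * ‖ξ‖ ^ 2 := by
        calc M * ‖ξ‖ * ‖r‖ ≤ M * ‖ξ‖ * (η * ‖ξ‖) :=
              mul_le_mul_of_nonneg_left hrn (mul_nonneg hM (norm_nonneg ξ))
          _ = M * η * ‖ξ‖ ^ 2 := by ring
      linarith [neg_abs_le (Q ξ r)]
    have hQrξ : -(M * η * ‖ξ‖ ^ 2) ≤ Q r ξ := by
      have h1 := Q.le_opNorm₂ r ξ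
      rw [Real.norm_eq_abs] at h1
      have h2 : M * ‖r‖ * ‖ξ‖ ≤ M * η * ‖ξ‖ ^ 2 := by
        calc M * ‖r‖ * ‖ξ‖ = M * ‖ξ‖ * ‖r‖ := by ring
          _ ≤ M * ‖ξ‖ * (η * ‖ξ‖) :=
              mul_le_mul_of_nonneg_left hrn (mul_nonneg hM (norm_nonneg ξ))
          _ = M * η * ‖ξ‖ ^ 2 := by ring
      linarith [neg_abs_le (Q r ξ)]
    have hQrr : -(M * η * ‖ξ‖ ^ 2) ≤ Q r r := by
      have h1 := Q.le_opNorm₂ r r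
      rw [Real.norm_eq_abs] at h1
      have hr2 : ‖r‖ * ‖r‖ ≤ (η * ‖ξ‖) * (η * ‖ξ‖) :=
        mul_le_mul hrn hrn (norm_nonneg r) (mul_nonneg hη.le (norm_nonneg ξ))
      have h2 : M * ‖r‖ * ‖r‖ ≤ M * η * ‖ξ‖ ^ 2 := by
        have h3 : M * (‖r‖ * ‖r‖) ≤ M * ((η * ‖ξ‖) * (η * ‖ξ‖)) :=
          mul_le_mul_of_nonneg_left hr2 hM
        have h4 : M * η * η * ‖ξ‖ ^ 2 ≤ M * η * 1 * ‖ξ‖ ^ 2 := by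
          apply mul_le_mul_of_nonneg_right _ (sq_nonneg ‖ξ‖)
          exact mul_le_mul_of_nonneg_left hη1 (mul_nonneg hM hη.le)
        calc M * ‖r‖ * ‖r‖ = M * (‖r‖ * ‖r‖) := by ring
          _ ≤ M * ((η * ‖ξ‖) * (η * ‖ξ‖)) := h3
          _ = M * η * η * ‖ξ‖ ^ 2 := by ring
          _ ≤ M * η * 1 * ‖ξ‖ ^ 2 := h4
          _ = M * η * ‖ξ‖ ^ 2 := by ring
      linarith [neg_abs_le (Q r r)]
    have hco := hcoer ξ hξT
    have hQvv : (3 * c / 4) * ‖ξ‖ ^ 2 ≤ Q v v := by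
      rw [hQv]
      have := mul_le_mul_of_nonneg_right hMη (sq_nonneg ‖ξ‖)
      linarith
    have hv2 : ‖v‖ ^ 2 ≤ 4 * ‖ξ‖ ^ 2 := by
      calc ‖v‖ ^ 2 ≤ (2 * ‖ξ‖) ^ 2 := by
            apply pow_le_pow_left₀ (norm_nonneg v) hvn
        _ = 4 * ‖ξ‖ ^ 2 := by ring
    have habs := (abs_le.mp htv).1
    have hcv : c / 16 * ‖v‖ ^ 2 ≤ c / 16 * (4 * ‖ξ‖ ^ 2) :=
      mul_le_mul_of_nonneg_left hv2 (by positivity)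
    rw [hφ]
    linarith [habs, hQvv, hcv, mul_pos hc (pow_pos hξpos 2)]
end
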